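/- If every vertex reachable from o by the run has a directed path to d in (V, E) (no reachable dead ends exist in the run's trajectory), then the run from o terminates, and the total number of edge traversals is at most |E| · 2^{n+1}, where n = |V|. -/

import Mathlib

/-!
If the run never reached `d`, some vertex `v` would be visited infinitely often. Its switch
flips at every visit, so both of its out-edges are taken infinitely often and both successors
are visited infinitely often; hence so is every vertex reachable from `v`. Since `v` is visited,
it is not a dead end, so `d` itself would be visited, a contradiction.

Once the run stops, its states (position, switch configuration) before the arrival time are
pairwise distinct, because the run is deterministic. So the arrival time is at most
`|V| · 2^|V| ≤ |E| · 2^(|V| + 1)`.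
-/

open scoped Classical

/-- A switch graph: every vertex has an even successor `s0 v` and an odd successor `s1 v`. -/
structure SwitchGraph (V : Type) where
  s0 : V → V
  s1 : V → V

namespace SwitchGraph

variable {V : Type}

/-- The successor of `v` along the edge of parity `b` (`false` = even, `true` = odd). -/
def succ (G : SwitchGraph V) (v : V) (b : Bool) : V :=
  if b then G.s1 v else G.s0 v

/-- One step of the run: move to the currently active successor and flip the switch. -/
def step [DecidableEq V] (G : SwitchGraph V) (p : V × (V → Bool)) : V × (V → Bool) :=
  (G.succ p.1 (p.2 p.1), Function.update p.2 p.1 (!p.2 p.1))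

/-- The state of the run after `n` steps, starting at `o` with all switches even,
stopping (freezing) upon reaching `d`. -/
def run [DecidableEq V] (G : SwitchGraph V) (o d : V) (n : ℕ) : V × (V → Bool) :=
  (fun p => if p.1 = d then p else G.step p)^[n] (o, fun _ => false)

/-- The run from `o` terminates at `d`. -/
def Terminates [DecidableEq V] (G : SwitchGraph V) (o d : V) : Prop :=
  ∃ n, (G.run o d n).1 = d

/-- Number of traversals of the outgoing edge of `v` of parity `b` during
the first `N` steps of the run. -/
def traversals [DecidableEq V] (G : SwitchGraph V) (o d : V) (N : ℕ) (v : V) (b : Bool) : ℕ :=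
  ((Finset.range N).filter
    (fun n => (G.run o d n).1 = v ∧ v ≠ d ∧ (G.run o d n).2 v = b)).card

/-- Total weight on edges leaving `v`. -/
def outflow {M : Type} [AddCommMonoid M] (x : V → Bool → M) (v : V) : M :=
  x v false + x v true

/-- Total weight on edges entering `v`. -/
def inflow [Fintype V] [DecidableEq V] (G : SwitchGraph V) {M : Type} [AddCommMonoid M]
    (x : V → Bool → M) (v : V) : M :=
  ∑ u : V, ∑ b : Bool, if G.succ u b = v then x u b else 0

/-- A switching flow: flow conservation of value 1 from `o` to `d`, together with the
balancing condition `x v true ≤ x v false ≤ x v true + 1` at every vertex. -/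
def IsSwitchingFlow [Fintype V] [DecidableEq V] (G : SwitchGraph V) (o d : V)
    (x : V → Bool → ℕ) : Prop :=
  (∀ v, outflow x v + (if v = d then 1 else 0) = G.inflow x v + (if v = o then 1 else 0)) ∧
  (∀ v, x v true ≤ x v false ∧ x v false ≤ x v true + 1)

/-- The edge relation of the underlying directed graph `(V, E)`. -/
def stepRel (G : SwitchGraph V) (a b : V) : Prop :=
  G.s0 a = b ∨ G.s1 a = b

/-- A dead end: a vertex with no directed path to `d` in `(V, E)`. -/
def DeadEnd (G : SwitchGraph V) (d w : V) : Prop :=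
  ¬ Relation.ReflTransGen G.stepRel w d

/-- There is a directed walk of length `k` from `w` to `d` in `(V, E)`. -/
def Chain (G : SwitchGraph V) (w d : V) (k : ℕ) : Prop :=
  ∃ f : ℕ → V, f 0 = w ∧ f k = d ∧ ∀ i < k, G.stepRel (f i) (f (i + 1))

end SwitchGraph

open SwitchGraph

namespace SwitchGraph

open Filter Relation

section Run

variable {V : Type} [DecidableEq V] (G : SwitchGraph V) (o d : V)

lemma run_succ (n : ℕ) :
    G.run o d (n + 1) =
      if (G.run o d n).1 = d then G.run o d n else G.step (G.run o d n) :=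
  Function.iterate_succ_apply' _ _ _

lemma run_add_eq_of_eq {a b : ℕ} (hab : G.run o d a = G.run o d b) (k : ℕ) :
    G.run o d (k + a) = G.run o d (k + b) := by
  simp only [run, Function.iterate_add_apply] at hab ⊢
  rw [hab]

variable {G o d}

lemma run_succ_of_ne {n : ℕ} (hn : (G.run o d n).1 ≠ d) :
    G.run o d (n + 1) = G.step (G.run o d n) := by
  rw [run_succ, if_neg hn]

lemma run_fst_succ {n : ℕ} (hn : (G.run o d n).1 ≠ d) :
    (G.run o d (n + 1)).1 = G.succ (G.run o d n).1 ((G.run o d n).2 (G.run o d n).1) := by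
  rw [run_succ_of_ne hn]
  rfl

lemma run_snd_succ_self {n : ℕ} (hn : (G.run o d n).1 ≠ d) :
    (G.run o d (n + 1)).2 (G.run o d n).1 = !(G.run o d n).2 (G.run o d n).1 := by
  rw [run_succ_of_ne hn]
  exact Function.update_self _ _ _

lemma run_snd_succ_of_ne {n : ℕ} {v : V} (hv : (G.run o d n).1 ≠ v) :
    (G.run o d (n + 1)).2 v = (G.run o d n).2 v := by
  rw [run_succ]
  split_ifs
  · rfl
  · exact Function.update_of_ne (Ne.symm hv) _ _

lemma run_snd_eq_of_forall_ne {v : V} {t s : ℕ} (hts : t ≤ s)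
    (hv : ∀ r, t ≤ r → r < s → (G.run o d r).1 ≠ v) :
    (G.run o d s).2 v = (G.run o d t).2 v := by
  induction s, hts using Nat.le_induction with
  | base => rfl
  | succ s hts ih =>
    rw [run_snd_succ_of_ne (hv s hts (Nat.lt_succ_self s))]
    exact ih fun r htr hrs => hv r htr (Nat.lt_succ_of_lt hrs)

end Run

section Termination

variable {V : Type} [DecidableEq V] {G : SwitchGraph V} {o d : V}

/-- Between two consecutive visits to `v` its switch flips exactly once. -/
lemma frequently_visit_with_switch {v : V} (hvd : v ≠ d)
    (hv : ∃ᶠ n in atTop, (G.run o d n).1 = v) (b : Bool) :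
    ∃ᶠ n in atTop, (G.run o d n).1 = v ∧ (G.run o d n).2 v = b := by
  rw [frequently_atTop] at hv ⊢
  intro T
  obtain ⟨t, hTt, ht⟩ := hv T
  by_cases hb : (G.run o d t).2 v = b
  · exact ⟨t, hTt, ht, hb⟩
  have hnext : ∃ k, (G.run o d (t + 1 + k)).1 = v := by
    obtain ⟨s, hts, hs⟩ := hv (t + 1)
    exact ⟨s - (t + 1), by rwa [Nat.add_sub_cancel' hts]⟩
  have hgap : ∀ r, t + 1 ≤ r → r < t + 1 + Nat.find hnext → (G.run o d r).1 ≠ v := by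
    intro r htr hr
    have := Nat.find_min hnext (m := r - (t + 1)) (by omega)
    rwa [Nat.add_sub_cancel' htr] at this
  refine ⟨t + 1 + Nat.find hnext, by omega, Nat.find_spec hnext, ?_⟩
  rw [run_snd_eq_of_forall_ne (Nat.le_add_right _ _) hgap, ← ht, run_snd_succ_self (ht ▸ hvd)]
  rw [← ht] at hb
  exact (Bool.eq_not.2 (Ne.symm hb)).symm

lemma frequently_visit_of_stepRel {v w : V} (hvd : v ≠ d)
    (hv : ∃ᶠ n in atTop, (G.run o d n).1 = v) (hvw : G.stepRel v w) :
    ∃ᶠ n in atTop, (G.run o d n).1 = w := by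
  obtain ⟨b, hb⟩ : ∃ b, G.succ v b = w := by
    rcases hvw with h | h
    exacts [⟨false, h⟩, ⟨true, h⟩]
  refine (tendsto_add_atTop_nat 1).frequently
    ((frequently_visit_with_switch hvd hv b).mono fun n ⟨hn, hsw⟩ => ?_)
  rw [run_fst_succ (hn ▸ hvd), hn, hsw, hb]

theorem terminates_of_forall_not_deadEnd [Finite V]
    (h : ∀ n, ¬ G.DeadEnd d (G.run o d n).1) : G.Terminates o d := by
  by_contra hnd
  simp only [Terminates, not_exists] at hnd
  obtain ⟨v, hv⟩ := Finite.exists_infinite_fiber fun n => (G.run o d n).1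
  have hv : ∃ᶠ n in atTop, (G.run o d n).1 = v :=
    Nat.frequently_atTop_iff_infinite.2 (Set.infinite_coe_iff.1 hv)
  obtain ⟨n, hn⟩ := hv.exists
  have hne : ∀ w, (∃ᶠ n in atTop, (G.run o d n).1 = w) → w ≠ d := fun w hw hwd =>
    let ⟨m, hm⟩ := hw.exists
    hnd m (hm.trans hwd)
  have hreach : ∀ w, ReflTransGen G.stepRel v w → ∃ᶠ n in atTop, (G.run o d n).1 = w := by
    intro w hvw
    induction hvw with
    | refl => exact hv
    | tail _ hstep ih => exact frequently_visit_of_stepRel (hne _ ih) ih hstep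
  exact hne d (hreach d (hn ▸ not_not.1 (h n))) rfl

end Termination

section Bound

variable {V : Type} [DecidableEq V] {G : SwitchGraph V} {o d : V}

/-- The run is deterministic, so a repeated state before the arrival time `N` would shift
the arrival at `d` to an earlier time. -/
lemma run_injOn_Iio_of_arrival {N : ℕ} (hN : (G.run o d N).1 = d)
    (hmin : ∀ m < N, (G.run o d m).1 ≠ d) : Set.InjOn (G.run o d) (Set.Iio N) := by
  intro a ha b hb hab
  by_contra hne
  wlog hlt : a < b generalizing a b
  · exact this hb ha hab.symm (Ne.symm hne) (by omega)
  have hshift := run_add_eq_of_eq G o d hab (N - b)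
  rw [Nat.sub_add_cancel (le_of_lt hb)] at hshift
  exact hmin (N - b + a) (by simp only [Set.mem_Iio] at hb; omega) (hshift ▸ hN)

lemma arrival_le_card_mul_two_pow [Fintype V] {N : ℕ} (hN : (G.run o d N).1 = d)
    (hmin : ∀ m < N, (G.run o d m).1 ≠ d) : N ≤ Fintype.card V * 2 ^ Fintype.card V := by
  calc N = (Finset.range N).card := (Finset.card_range N).symm
    _ ≤ (Finset.univ : Finset (V × (V → Bool))).card :=
      Finset.card_le_card_of_injOn _ (fun _ _ => Finset.mem_coe.2 (Finset.mem_univ _))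
        (by rw [Finset.coe_range]; exact run_injOn_Iio_of_arrival hN hmin)
    _ = Fintype.card V * 2 ^ Fintype.card V := by
      simp [Fintype.card_prod]

end Bound

lemma card_le_card_edges {V : Type} [Fintype V] [DecidableEq V] (G : SwitchGraph V) :
    Fintype.card V ≤ ((Finset.univ.image fun v => (v, G.s0 v)) ∪
      (Finset.univ.image fun v => (v, G.s1 v))).card :=
  calc Fintype.card V = (Finset.univ.image fun v => (v, G.s0 v)).card :=
        (Finset.card_image_of_injective _ fun _ _ h => (Prod.ext_iff.1 h).1).symm
    _ ≤ _ := Finset.card_le_card Finset.subset_union_left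

end SwitchGraph

theorem stmt13_general {V : Type} [Fintype V] [DecidableEq V] (G : SwitchGraph V) (o d : V)
    (h : ∀ N, ¬ G.DeadEnd d (G.run o d N).1) :
    ∃ N, (G.run o d N).1 = d ∧
      N ≤ ((Finset.univ.image fun v => (v, G.s0 v)) ∪
            (Finset.univ.image fun v => (v, G.s1 v))).card
          * 2 ^ (Fintype.card V + 1) := by
  have hterm := G.terminates_of_forall_not_deadEnd h
  refine ⟨Nat.find hterm, Nat.find_spec hterm, ?_⟩
  calc Nat.find hterm ≤ Fintype.card V * 2 ^ Fintype.card V :=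
        arrival_le_card_mul_two_pow (Nat.find_spec hterm) fun m hm => Nat.find_min hterm hm
    _ ≤ _ := Nat.mul_le_mul G.card_le_card_edges (Nat.pow_le_pow_right two_pos (Nat.le_succ _))

/-- If every vertex visited by the run has a directed path to `d`, then the run terminates
within `|E| · 2^(n+1)` edge traversals, where `n = |V|`. -/
theorem stmt13 {V : Type} [Fintype V] [DecidableEq V] (G : SwitchGraph V) (o d : V)
    (hod : o ≠ d) (h : ∀ N, ¬ G.DeadEnd d (G.run o d N).1) :
    ∃ N, (G.run o d N).1 = d ∧
      N ≤ ((Finset.univ.image fun v => (v, G.s0 v)) ∪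
            (Finset.univ.image fun v => (v, G.s1 v))).card
          * 2 ^ (Fintype.card V + 1) :=
  stmt13_general G o d h
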